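/- Let E be a nonempty compact subset of ℝ (with the standard metric) and t > 0. Then the function λ ↦ D^t(λ·E) − (λ·D^t(E) + (1 − λ)) is concave on [0,∞), where λ·E = { λx : x ∈ E }; equivalently, the function λ ↦ D^t(λ·E) is concave on [0,∞). -/

import Mathlib

open scoped Pointwise

/-- The exponentiated metric complexity `D^t(A)` of a finite subset `A` of a metric
space: the supremum over finitely supported probability measures `p` supported in `A`
of `(∑_{x,y} p(x)·p(y)·e^{−t·d(x,y)})⁻¹`, with `D^t(∅) = 1` by convention. -/
noncomputable def Dfin {X : Type*} [MetricSpace X] (t : ℝ) (A : Finset X) : ℝ :=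
  if A.Nonempty then
    sSup { r : ℝ | ∃ p : X → ℝ, (∀ x, 0 ≤ p x) ∧ (∀ x, p x ≠ 0 → x ∈ A) ∧
      (∑ x ∈ A, p x) = 1 ∧
      r = (∑ x ∈ A, ∑ y ∈ A, p x * p y * Real.exp (-(t * dist x y)))⁻¹ }
  else 1

/-- The exponentiated metric complexity of a compact (or arbitrary) subset `K`:
the supremum of `D^t(F)` over finite subsets `F ⊆ K`. -/
noncomputable def Dcpt {X : Type*} [MetricSpace X] (t : ℝ) (K : Set X) : ℝ :=
  sSup { r : ℝ | ∃ F : Finset X, ↑F ⊆ K ∧ r = Dfin t F }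

open Finset Real
open scoped Pointwise

section DcptAux

/-- tanh is concave on [0,∞). -/
lemma tanh_concaveOn : ConcaveOn ℝ (Set.Ici (0:ℝ)) Real.tanh := by
  have htanh : Real.tanh = fun x => Real.sinh x / Real.cosh x :=
    funext fun x => Real.tanh_eq_sinh_div_cosh x
  rw [htanh]
  have hint : interior (Set.Ici (0:ℝ)) = Set.Ioi 0 := interior_Ici
  apply concaveOn_of_hasDerivWithinAt2_nonpos (f' := fun x => (Real.cosh x ^ 2)⁻¹)
      (f'' := fun x => -(2 * Real.cosh x ^ 1 * Real.sinh x) / (Real.cosh x ^ 2) ^ 2)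
      (convex_Ici 0)
  · exact (Real.continuous_sinh.div Real.continuous_cosh
      (fun x => (Real.cosh_pos x).ne')).continuousOn
  · intro x hx
    have h : HasDerivAt (fun x => Real.sinh x / Real.cosh x)
        ((Real.cosh x * Real.cosh x - Real.sinh x * Real.sinh x) / (Real.cosh x) ^ 2) x :=
      (Real.hasDerivAt_sinh x).div (Real.hasDerivAt_cosh x) (Real.cosh_pos x).ne'
    have he : (Real.cosh x * Real.cosh x - Real.sinh x * Real.sinh x) / (Real.cosh x) ^ 2
        = (Real.cosh x ^ 2)⁻¹ := by
      have h1 := Real.cosh_sq_sub_sinh_sq x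
      have h2 : Real.cosh x ^ 2 ≠ 0 := by positivity
      field_simp
      nlinarith [h1]
    rw [he] at h
    exact h.hasDerivWithinAt
  · intro x hx
    have h1 : HasDerivAt (fun x => Real.cosh x ^ 2) (2 * Real.cosh x ^ 1 * Real.sinh x) x :=
      (Real.hasDerivAt_cosh x).pow 2
    have h2 : Real.cosh x ^ 2 ≠ 0 := by positivity
    exact ((h1.inv h2)).hasDerivWithinAt
  · intro x hx
    rw [hint] at hx
    have hs : 0 ≤ Real.sinh x := by
      have := Real.sinh_pos_iff.mpr (Set.mem_Ioi.mp hx)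
      linarith
    have hc : 0 < Real.cosh x := Real.cosh_pos x
    apply div_nonpos_of_nonpos_of_nonneg
    · nlinarith
    · positivity

/-- tanh is nonnegative on nonneg arguments. -/
lemma tanh_nonneg' {x : ℝ} (hx : 0 ≤ x) : 0 ≤ Real.tanh x := by
  rw [Real.tanh_eq_sinh_div_cosh]
  apply div_nonneg _ (Real.cosh_pos x).le
  rcases eq_or_lt_of_le hx with h | h
  · simp [← h]
  · exact (Real.sinh_pos_iff.mpr h).le

lemma tanh_combo {a x y p q : ℝ} (ha : 0 ≤ a) (hx : 0 ≤ x) (hy : 0 ≤ y)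
    (hp : 0 ≤ p) (hq : 0 ≤ q) (hpq : p + q = 1) :
    p * Real.tanh (a * x) + q * Real.tanh (a * y) ≤ Real.tanh (a * (p * x + q * y)) := by
  have h := tanh_concaveOn.2 (Set.mem_Ici.mpr (mul_nonneg ha hx))
    (Set.mem_Ici.mpr (mul_nonneg ha hy)) hp hq hpq
  simp only [smul_eq_mul] at h
  have : a * (p * x + q * y) = p * (a * x) + q * (a * y) := by ring
  rw [this]
  exact h

/-- The key algebraic identity for the weighting. -/
lemma key_identity (t d : ℝ) :
    Real.exp (-(t * d)) * (1 + Real.tanh (t * d / 2)) + Real.tanh (t * d / 2) = 1 := by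
  set s := t * d / 2 with hs
  have h2 : t * d = 2 * s := by rw [hs]; ring
  rw [h2, Real.tanh_eq_sinh_div_cosh, Real.sinh_eq, Real.cosh_eq]
  have hE : Real.exp s * Real.exp (-s) = 1 := by
    rw [← Real.exp_add]; simp
  have hexp : Real.exp (-(2 * s)) = Real.exp (-s) * Real.exp (-s) := by
    rw [← Real.exp_add]; ring_nf
  rw [hexp]
  have hden : Real.exp s + Real.exp (-s) ≠ 0 := by positivity
  field_simp
  linear_combination (2 * Real.exp (-s)) * hE

/-- Positive semidefiniteness (with a boundary term) of the kernel exp(-t|x-y|) on ℝ. -/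
lemma psd_aux (t : ℝ) (ht : 0 ≤ t) (c x : ℕ → ℝ) :
    ∀ n : ℕ, (∀ i j, i ≤ j → j < n → x i ≤ x j) → ∀ m, (∀ i, i < n → x i ≤ m) →
    (∑ i ∈ Finset.range n, c i * Real.exp (-(t * (m - x i)))) ^ 2 ≤
      ∑ i ∈ Finset.range n, ∑ j ∈ Finset.range n, c i * c j * Real.exp (-(t * |x i - x j|)) := by
  intro n
  induction n with
  | zero => intro _ m _; simp
  | succ n ih =>
    intro hmono m hm
    have hxn : ∀ i, i < n → x i ≤ x n := fun i hi => hmono i n (Nat.le_of_lt hi) (Nat.lt_succ_self n)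
    set r := ∑ i ∈ Finset.range n, c i * Real.exp (-(t * (x n - x i))) with hr
    have hIH : r ^ 2 ≤ ∑ i ∈ Finset.range n, ∑ j ∈ Finset.range n,
        c i * c j * Real.exp (-(t * |x i - x j|)) :=
      ih (fun i j hij hj => hmono i j hij (Nat.lt_succ_of_lt hj)) (x n) hxn
    set ε := Real.exp (-(t * (m - x n))) with hε
    have hε0 : 0 < ε := Real.exp_pos _
    have hε1 : ε ≤ 1 := by
      rw [hε, Real.exp_le_one_iff]
      have := hm n (Nat.lt_succ_self n)
      nlinarith
    -- LHS
    have hterm : ∀ i, c i * Real.exp (-(t * (m - x i)))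
        = ε * (c i * Real.exp (-(t * (x n - x i)))) := by
      intro i
      have h : Real.exp (-(t * (m - x i))) = ε * Real.exp (-(t * (x n - x i))) := by
        rw [hε, ← Real.exp_add]
        congr 1
        ring
      rw [h]
      ring
    have hL : (∑ i ∈ Finset.range (n+1), c i * Real.exp (-(t * (m - x i)))) = ε * (r + c n) := by
      rw [Finset.sum_range_succ, Finset.sum_congr rfl (fun i _ => hterm i), ← Finset.mul_sum,
        ← hr, hterm n, mul_add]
      congr 2
      simp
    -- RHS
    have habs : ∀ i, i < n → |x i - x n| = x n - x i := by
      intro i hi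
      rw [abs_sub_comm, abs_of_nonneg (by linarith [hxn i hi])]
    have hR : (∑ i ∈ Finset.range (n+1), ∑ j ∈ Finset.range (n+1),
          c i * c j * Real.exp (-(t * |x i - x j|)))
        = (∑ i ∈ Finset.range n, ∑ j ∈ Finset.range n, c i * c j * Real.exp (-(t * |x i - x j|)))
          + 2 * c n * r + c n ^ 2 := by
      rw [Finset.sum_range_succ]
      have h1 : ∀ i ∈ Finset.range n, (∑ j ∈ Finset.range (n+1),
            c i * c j * Real.exp (-(t * |x i - x j|)))
          = (∑ j ∈ Finset.range n, c i * c j * Real.exp (-(t * |x i - x j|)))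
            + c n * (c i * Real.exp (-(t * (x n - x i)))) := by
        intro i hi
        rw [Finset.sum_range_succ]
        congr 1
        rw [habs i (Finset.mem_range.mp hi)]
        ring
      rw [Finset.sum_congr rfl h1, Finset.sum_add_distrib, ← Finset.mul_sum, ← hr]
      have h2 : (∑ j ∈ Finset.range (n+1), c n * c j * Real.exp (-(t * |x n - x j|)))
          = c n * r + c n ^ 2 := by
        rw [Finset.sum_range_succ]
        congr 1
        · rw [hr, Finset.mul_sum]
          apply Finset.sum_congr rfl
          intro j hj
          rw [abs_sub_comm, habs j (Finset.mem_range.mp hj)]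
          ring
        · simp [sq]
      rw [h2]
      ring
    rw [hL, hR]
    have hε2 : ε ^ 2 ≤ 1 := by nlinarith
    have h3 : (ε * (r + c n)) ^ 2 ≤ (r + c n) ^ 2 := by
      have he : (ε * (r + c n)) ^ 2 = ε ^ 2 * (r + c n) ^ 2 := by ring
      rw [he]
      nlinarith [sq_nonneg (r + c n)]
    nlinarith [hIH, h3]

noncomputable def gtau (t : ℝ) (x : ℕ → ℝ) (j : ℕ) : ℝ := Real.tanh (t * (x (j+1) - x j) / 2)

noncomputable def wgt (t : ℝ) (n : ℕ) (x : ℕ → ℝ) (i : ℕ) : ℝ :=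
  ((if i = 0 then 1 else gtau t x (i-1)) + (if i = n - 1 then 1 else gtau t x i)) / 2


lemma Lsum (t : ℝ) (n : ℕ) (x : ℕ → ℝ) :
    ∀ i, i < n → (∑ j ∈ Finset.range (i+1), wgt t n x j * Real.exp (-(t * (x i - x j))))
      = (1 + (if i = n-1 then 1 else gtau t x i)) / 2 := by
  intro i
  induction i with
  | zero =>
    intro _
    simp [wgt]
  | succ i ih =>
    intro hi
    have hilt : i < n := Nat.lt_of_succ_lt hi
    have hine : i ≠ n - 1 := by omega
    set ε := Real.exp (-(t * (x (i+1) - x i))) with hε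
    have hterm : ∀ j, wgt t n x j * Real.exp (-(t * (x (i+1) - x j)))
        = ε * (wgt t n x j * Real.exp (-(t * (x i - x j)))) := by
      intro j
      have h : Real.exp (-(t * (x (i+1) - x j))) = ε * Real.exp (-(t * (x i - x j))) := by
        rw [hε, ← Real.exp_add]; congr 1; ring
      rw [h]; ring
    rw [Finset.sum_range_succ, Finset.sum_congr rfl (fun j _ => hterm j), ← Finset.mul_sum,
      ih hilt, if_neg hine]
    have hw : wgt t n x (i+1) = (gtau t x i + (if i + 1 = n - 1 then 1 else gtau t x (i+1))) / 2 := by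
      simp [wgt]
    have hk := key_identity t (x (i+1) - x i)
    have hsub : x (i+1) - x (i+1) = 0 := by ring
    rw [hw, hsub, mul_zero, neg_zero, Real.exp_zero, mul_one]
    have hg : gtau t x i = Real.tanh (t * (x (i+1) - x i) / 2) := rfl
    rw [hg] at *
    set τ := Real.tanh (t * (x (i+1) - x i) / 2)
    linarith [hk]

lemma Rsum (t : ℝ) (n : ℕ) (x : ℕ → ℝ) :
    ∀ k i, i < n → n - 1 - i = k →
    (∑ j ∈ Finset.Ico i n, wgt t n x j * Real.exp (-(t * (x j - x i))))
      = (1 + (if i = 0 then 1 else gtau t x (i-1))) / 2 := by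
  intro k
  induction k with
  | zero =>
    intro i hi hk
    have hieq : i = n - 1 := by omega
    have hIco : Finset.Ico i n = {i} := by
      have hn : n = i + 1 := by omega
      rw [hn, Nat.Ico_succ_singleton]
    have hsub : x i - x i = 0 := by ring
    rw [hIco, Finset.sum_singleton, hsub, mul_zero, neg_zero, Real.exp_zero, mul_one, wgt,
      if_pos hieq]
    ring
  | succ k ih =>
    intro i hi hk
    have hi1 : i + 1 < n := by omega
    have hine : i ≠ n - 1 := by omega
    set ε := Real.exp (-(t * (x (i+1) - x i))) with hε
    have hterm : ∀ j, wgt t n x j * Real.exp (-(t * (x j - x i)))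
        = ε * (wgt t n x j * Real.exp (-(t * (x j - x (i+1))))) := by
      intro j
      have h : Real.exp (-(t * (x j - x i))) = ε * Real.exp (-(t * (x j - x (i+1)))) := by
        rw [hε, ← Real.exp_add]; congr 1; ring
      rw [h]; ring
    rw [Finset.sum_eq_sum_Ico_succ_bot hi]
    rw [Finset.sum_congr rfl (fun j _ => hterm j), ← Finset.mul_sum, ih (i+1) hi1 (by omega)]
    have hsub : x i - x i = 0 := by ring
    rw [hsub, mul_zero, neg_zero, Real.exp_zero, mul_one]
    rw [if_neg (Nat.succ_ne_zero i)]
    have hw : wgt t n x i = ((if i = 0 then 1 else gtau t x (i-1)) + gtau t x i) / 2 := by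
      rw [wgt, if_neg hine]
    have hsimp : i + 1 - 1 = i := rfl
    rw [hsimp, hw]
    have hk2 := key_identity t (x (i+1) - x i)
    have hg : gtau t x i = Real.tanh (t * (x (i+1) - x i) / 2) := rfl
    rw [hg] at *
    set τ := Real.tanh (t * (x (i+1) - x i) / 2)
    set l := (if i = 0 then (1:ℝ) else gtau t x (i-1))
    linarith [hk2]

lemma row_sum (t : ℝ) (n : ℕ) (x : ℕ → ℝ)
    (hmono : ∀ i j, i ≤ j → j < n → x i ≤ x j) :
    ∀ i, i < n → (∑ j ∈ Finset.range n, wgt t n x j * Real.exp (-(t * |x i - x j|))) = 1 := by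
  intro i hi
  have hsplit : Finset.range n = Finset.Ico 0 (i+1) ∪ Finset.Ico (i+1) n := by
    rw [Finset.range_eq_Ico, ← Finset.Ico_union_Ico_eq_Ico (Nat.zero_le (i+1)) hi]
  have hdisj : Disjoint (Finset.Ico 0 (i+1)) (Finset.Ico (i+1) n) := by
    apply Finset.Ico_disjoint_Ico_consecutive
  rw [hsplit, Finset.sum_union hdisj]
  have h1 : (∑ j ∈ Finset.Ico 0 (i+1), wgt t n x j * Real.exp (-(t * |x i - x j|)))
      = (∑ j ∈ Finset.range (i+1), wgt t n x j * Real.exp (-(t * (x i - x j)))) := by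
    rw [← Finset.range_eq_Ico]
    apply Finset.sum_congr rfl
    intro j hj
    have hj' : j ≤ i := by simp at hj; omega
    rw [abs_of_nonneg (by linarith [hmono j i hj' hi])]
  have h2 : (∑ j ∈ Finset.Ico (i+1) n, wgt t n x j * Real.exp (-(t * |x i - x j|)))
      = (∑ j ∈ Finset.Ico (i+1) n, wgt t n x j * Real.exp (-(t * (x j - x i)))) := by
    apply Finset.sum_congr rfl
    intro j hj
    rw [Finset.mem_Ico] at hj
    have : x i ≤ x j := hmono i j (by omega) hj.2
    rw [abs_sub_comm, abs_of_nonneg (by linarith)]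
  have h3 : (∑ j ∈ Finset.Ico i n, wgt t n x j * Real.exp (-(t * (x j - x i))))
      = wgt t n x i + ∑ j ∈ Finset.Ico (i+1) n, wgt t n x j * Real.exp (-(t * (x j - x i))) := by
    rw [Finset.sum_eq_sum_Ico_succ_bot hi]
    have hsub : x i - x i = 0 := by ring
    rw [hsub, mul_zero, neg_zero, Real.exp_zero, mul_one]
  rw [h1, h2, Lsum t n x i hi]
  have h4 := Rsum t n x (n - 1 - i) i hi rfl
  have h5 : (∑ j ∈ Finset.Ico (i+1) n, wgt t n x j * Real.exp (-(t * (x j - x i))))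
      = (1 + (if i = 0 then 1 else gtau t x (i-1))) / 2 - wgt t n x i := by
    rw [← h4, h3]; ring
  rw [h5, wgt]
  ring

lemma wgt_sum (t : ℝ) (n : ℕ) (x : ℕ → ℝ) (hn : 0 < n) :
    (∑ i ∈ Finset.range n, wgt t n x i) = 1 + ∑ j ∈ Finset.range (n-1), gtau t x j := by
  obtain ⟨m, rfl⟩ : ∃ m, n = m + 1 := ⟨n - 1, by omega⟩
  have hl : (∑ i ∈ Finset.range (m+1), (if i = 0 then (1:ℝ) else gtau t x (i-1)))
      = 1 + ∑ j ∈ Finset.range m, gtau t x j := by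
    rw [Finset.sum_range_succ']
    simp [Nat.add_sub_cancel]
    ring
  have hr : (∑ i ∈ Finset.range (m+1), (if i = (m+1) - 1 then (1:ℝ) else gtau t x i))
      = 1 + ∑ j ∈ Finset.range m, gtau t x j := by
    rw [Finset.sum_range_succ]
    have : ∀ i ∈ Finset.range m, (if i = (m+1) - 1 then (1:ℝ) else gtau t x i) = gtau t x i := by
      intro i hi
      rw [if_neg (by simp at hi; omega)]
    rw [Finset.sum_congr rfl this]
    simp [add_comm]
  have : (∑ i ∈ Finset.range (m+1), wgt t (m+1) x i)
      = ((∑ i ∈ Finset.range (m+1), (if i = 0 then (1:ℝ) else gtau t x (i-1)))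
        + (∑ i ∈ Finset.range (m+1), (if i = (m+1) - 1 then (1:ℝ) else gtau t x i))) / 2 := by
    rw [← Finset.sum_add_distrib, Finset.sum_div]
    apply Finset.sum_congr rfl
    intro i _
    rw [wgt]
  rw [this, hl, hr, show m + 1 - 1 = m from rfl]
  ring

lemma gtau_nonneg (t : ℝ) (ht : 0 ≤ t) (x : ℕ → ℝ) (j : ℕ) (h : x j ≤ x (j+1)) :
    0 ≤ gtau t x j := by
  apply tanh_nonneg'
  have : 0 ≤ x (j+1) - x j := by linarith
  positivity

lemma wgt_nonneg (t : ℝ) (ht : 0 ≤ t) (n : ℕ) (x : ℕ → ℝ)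
    (hmono : ∀ i j, i ≤ j → j < n → x i ≤ x j) :
    ∀ i, i < n → 0 ≤ wgt t n x i := by
  intro i hi
  rw [wgt]
  have hl : (0:ℝ) ≤ (if i = 0 then 1 else gtau t x (i-1)) := by
    split
    · norm_num
    · rename_i h0
      have hii : i - 1 + 1 = i := by omega
      apply gtau_nonneg t ht
      rw [hii]
      exact hmono (i-1) i (by omega) hi
  have hr : (0:ℝ) ≤ (if i = n - 1 then 1 else gtau t x i) := by
    split
    · norm_num
    · rename_i h0
      apply gtau_nonneg t ht
      exact hmono i (i+1) (by omega) (by omega)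
  linarith

/-- Master formula: maximum diversity of a finite subset of ℝ. -/
lemma Dfin_eq_formula (t : ℝ) (ht : 0 < t) (n : ℕ) (hn : 0 < n) (x : ℕ → ℝ)
    (hx : ∀ i, i + 1 < n → x i < x (i+1)) :
    Dfin t ((Finset.range n).image x) = 1 + ∑ j ∈ Finset.range (n-1), gtau t x j := by
  have hlt : ∀ i j, i < j → j < n → x i < x j := by
    intro i j hij hjn
    induction j with
    | zero => omega
    | succ j ihj =>
      rcases Nat.lt_succ_iff_lt_or_eq.mp hij with h | h
      · exact lt_trans (ihj h (by omega)) (hx j (by omega))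
      · subst h; exact hx i (by omega)
  have hmono : ∀ i j, i ≤ j → j < n → x i ≤ x j := by
    intro i j hij hjn
    rcases Nat.lt_or_ge i j with h | h
    · exact (hlt i j h hjn).le
    · have : i = j := by omega
      subst this; rfl
  have hinj : ∀ i ∈ Finset.range n, ∀ j ∈ Finset.range n, x i = x j → i = j := by
    intro i hi j hj hxe
    simp only [Finset.mem_range] at hi hj
    by_contra hne
    rcases Nat.lt_or_ge i j with h | h
    · exact absurd hxe (hlt i j h hj).ne
    · have : j < i := by omega
      exact absurd hxe.symm (hlt j i this hi).ne
  set A := (Finset.range n).image x with hA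
  have hAne : A.Nonempty := ⟨x 0, Finset.mem_image.mpr ⟨0, Finset.mem_range.mpr hn, rfl⟩⟩
  set M := 1 + ∑ j ∈ Finset.range (n-1), gtau t x j with hM
  have hSnn : 0 ≤ ∑ j ∈ Finset.range (n-1), gtau t x j := by
    apply Finset.sum_nonneg
    intro j hj
    simp only [Finset.mem_range] at hj
    exact gtau_nonneg t ht.le x j (hmono j (j+1) (by omega) (by omega))
  have hM1 : 1 ≤ M := by rw [hM]; linarith
  have hMpos : 0 < M := by linarith
  have hwsum : (∑ i ∈ Finset.range n, wgt t n x i) = M := wgt_sum t n x hn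
  -- transfer of sums
  have htrans : ∀ f : ℝ → ℝ, (∑ z ∈ A, f z) = ∑ i ∈ Finset.range n, f (x i) := by
    intro f
    rw [hA, Finset.sum_image hinj]
  rw [Dfin, if_pos hAne]
  apply IsGreatest.csSup_eq
  constructor
  · -- membership: the normalized weighting achieves M
    refine ⟨fun z => ∑ i ∈ Finset.range n, if x i = z then wgt t n x i / M else 0, ?_, ?_, ?_, ?_⟩
    · intro z
      apply Finset.sum_nonneg
      intro i hi
      split
      · exact div_nonneg (wgt_nonneg t ht.le n x hmono i (Finset.mem_range.mp hi)) hMpos.le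
      · rfl
    · intro z hz
      by_contra hzA
      apply hz
      apply Finset.sum_eq_zero
      intro i hi
      rw [if_neg]
      intro hxe
      exact hzA (hA ▸ Finset.mem_image.mpr ⟨i, hi, hxe⟩)
    · rw [Finset.sum_comm]
      have h1 : ∀ i ∈ Finset.range n,
          (∑ z ∈ A, if x i = z then wgt t n x i / M else 0) = wgt t n x i / M := by
        intro i hi
        rw [Finset.sum_ite_eq A (x i) (fun _ => wgt t n x i / M),
          if_pos (hA ▸ Finset.mem_image.mpr ⟨i, hi, rfl⟩)]
      rw [Finset.sum_congr rfl h1, ← Finset.sum_div, hwsum, div_self hMpos.ne']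
    · -- value of the quadratic form
      have hval : ∀ i ∈ Finset.range n,
          (∑ j ∈ Finset.range n, if x j = x i then wgt t n x j / M else 0) = wgt t n x i / M := by
        intro i hi
        have : ∀ j ∈ Finset.range n, (if x j = x i then wgt t n x j / M else 0)
            = (if j = i then wgt t n x j / M else 0) := by
          intro j hj
          by_cases h : j = i
          · subst h; simp
          · rw [if_neg h, if_neg (fun hxe => h (hinj j hj i hi hxe))]
        rw [Finset.sum_congr rfl this, Finset.sum_ite_eq' (Finset.range n) i, if_pos hi]
      have hdist : ∀ z w : ℝ, Real.exp (-(t * dist z w)) = Real.exp (-(t * |z - w|)) := by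
        intro z w; rw [Real.dist_eq]
      have hQ : (∑ z ∈ A, ∑ w ∈ A,
            (∑ i ∈ Finset.range n, if x i = z then wgt t n x i / M else 0)
            * (∑ i ∈ Finset.range n, if x i = w then wgt t n x i / M else 0)
            * Real.exp (-(t * dist z w)))
          = 1 / M := by
        rw [htrans]
        have houter : ∀ i ∈ Finset.range n,
            (∑ w ∈ A, (∑ k ∈ Finset.range n, if x k = x i then wgt t n x k / M else 0)
              * (∑ k ∈ Finset.range n, if x k = w then wgt t n x k / M else 0)
              * Real.exp (-(t * dist (x i) w))) = (wgt t n x i / M) * (1 / M) := by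
          intro i hi
          rw [htrans]
          have hinner : ∀ j ∈ Finset.range n,
              (∑ k ∈ Finset.range n, if x k = x i then wgt t n x k / M else 0)
              * (∑ k ∈ Finset.range n, if x k = x j then wgt t n x k / M else 0)
              * Real.exp (-(t * dist (x i) (x j)))
              = (wgt t n x i / M) * ((wgt t n x j * Real.exp (-(t * |x i - x j|))) / M) := by
            intro j hj
            rw [hval i hi, hval j hj, Real.dist_eq]
            ring
          rw [Finset.sum_congr rfl hinner, ← Finset.mul_sum, ← Finset.sum_div,
            row_sum t n x hmono i (Finset.mem_range.mp hi)]
        rw [Finset.sum_congr rfl houter, ← Finset.sum_mul, ← Finset.sum_div, hwsum,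
          div_self hMpos.ne', one_mul]
      rw [hQ]
      rw [one_div, inv_inv]
  · -- upper bound
    rintro r ⟨p, hp0, hpsup, hpsum, hr⟩
    set c : ℕ → ℝ := fun i => p (x i) with hc
    have hcsum : (∑ i ∈ Finset.range n, c i) = 1 := by rw [← htrans p, hpsum]
    set Q := ∑ i ∈ Finset.range n, ∑ j ∈ Finset.range n,
      c i * c j * Real.exp (-(t * |x i - x j|)) with hQdef
    have hQ : (∑ z ∈ A, ∑ w ∈ A, p z * p w * Real.exp (-(t * dist z w))) = Q := by
      rw [htrans]
      apply Finset.sum_congr rfl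
      intro i _
      rw [htrans]
      apply Finset.sum_congr rfl
      intro j _
      rw [Real.dist_eq]
    -- lower bound on Q via the PSD inequality
    set u : ℕ → ℝ := fun i => c i - wgt t n x i / M with hu
    have h0 : 0 ≤ ∑ i ∈ Finset.range n, ∑ j ∈ Finset.range n,
        u i * u j * Real.exp (-(t * |x i - x j|)) := by
      refine le_trans (sq_nonneg _) (psd_aux t ht.le u x n hmono (x (n-1)) ?_)
      intro i hi
      exact hmono i (n-1) (by omega) (by omega)
    have hrow : ∀ i, i < n →
        (∑ j ∈ Finset.range n, u j * Real.exp (-(t * |x i - x j|)))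
        = (∑ j ∈ Finset.range n, c j * Real.exp (-(t * |x i - x j|))) - 1 / M := by
      intro i hi
      have : ∀ j ∈ Finset.range n, u j * Real.exp (-(t * |x i - x j|))
          = c j * Real.exp (-(t * |x i - x j|))
            - (wgt t n x j * Real.exp (-(t * |x i - x j|))) / M := by
        intro j _
        rw [hu]
        ring
      rw [Finset.sum_congr rfl this, Finset.sum_sub_distrib, ← Finset.sum_div,
        row_sum t n x hmono i hi]
    have hexpand : (∑ i ∈ Finset.range n, ∑ j ∈ Finset.range n,
        u i * u j * Real.exp (-(t * |x i - x j|)))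
        = Q - 1/M := by
      have h1 : ∀ i ∈ Finset.range n, (∑ j ∈ Finset.range n,
          u i * u j * Real.exp (-(t * |x i - x j|)))
          = u i * ((∑ j ∈ Finset.range n, c j * Real.exp (-(t * |x i - x j|))) - 1 / M) := by
        intro i hi
        rw [← hrow i (Finset.mem_range.mp hi), Finset.mul_sum]
        apply Finset.sum_congr rfl
        intro j _
        ring
      rw [Finset.sum_congr rfl h1]
      have h2 : ∀ i ∈ Finset.range n,
          u i * ((∑ j ∈ Finset.range n, c j * Real.exp (-(t * |x i - x j|))) - 1 / M)
          = (c i * (∑ j ∈ Finset.range n, c j * Real.exp (-(t * |x i - x j|)))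
            - (wgt t n x i * (∑ j ∈ Finset.range n, c j * Real.exp (-(t * |x i - x j|)))) / M)
            - u i * (1/M) := by
        intro i _
        rw [hu]
        ring
      rw [Finset.sum_congr rfl h2, Finset.sum_sub_distrib, Finset.sum_sub_distrib]
      have h3 : (∑ i ∈ Finset.range n, c i *
          (∑ j ∈ Finset.range n, c j * Real.exp (-(t * |x i - x j|)))) = Q := by
        rw [hQdef]
        apply Finset.sum_congr rfl
        intro i _
        rw [Finset.mul_sum]
        apply Finset.sum_congr rfl
        intro j _
        ring
      have h4 : (∑ i ∈ Finset.range n, (wgt t n x i *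
          (∑ j ∈ Finset.range n, c j * Real.exp (-(t * |x i - x j|)))) / M) = 1 / M := by
        have h5 : (∑ i ∈ Finset.range n, wgt t n x i *
            (∑ j ∈ Finset.range n, c j * Real.exp (-(t * |x i - x j|)))) = 1 := by
          have h6 : ∀ i ∈ Finset.range n, wgt t n x i *
              (∑ j ∈ Finset.range n, c j * Real.exp (-(t * |x i - x j|)))
              = ∑ j ∈ Finset.range n, c j * (wgt t n x i * Real.exp (-(t * |x j - x i|))) := by
            intro i _
            rw [Finset.mul_sum]
            apply Finset.sum_congr rfl
            intro j _
            rw [abs_sub_comm]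
            ring
          rw [Finset.sum_congr rfl h6, Finset.sum_comm]
          have h7 : ∀ j ∈ Finset.range n,
              (∑ i ∈ Finset.range n, c j * (wgt t n x i * Real.exp (-(t * |x j - x i|))))
              = c j := by
            intro j hj
            rw [← Finset.mul_sum, row_sum t n x hmono j (Finset.mem_range.mp hj), mul_one]
          rw [Finset.sum_congr rfl h7, hcsum]
        rw [← Finset.sum_div, h5]
      have h8 : (∑ i ∈ Finset.range n, u i * (1/M)) = 0 := by
        rw [← Finset.sum_mul]
        have : (∑ i ∈ Finset.range n, u i) = 0 := by
          have : ∀ i ∈ Finset.range n, u i = c i - wgt t n x i / M := fun i _ => rfl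
          rw [Finset.sum_congr rfl this, Finset.sum_sub_distrib, hcsum, ← Finset.sum_div,
            hwsum, div_self hMpos.ne']
          ring
        rw [this, zero_mul]
      rw [h3, h4, h8]
      ring
    have hQge : 1 / M ≤ Q := by
      rw [hexpand] at h0
      linarith
    have hQpos : 0 < Q := lt_of_lt_of_le (by positivity) hQge
    rw [hr, hQ]
    calc Q⁻¹ ≤ (1/M)⁻¹ := by
          apply inv_anti₀ (by positivity) hQge
      _ = M := by rw [one_div, inv_inv]

def DS (t : ℝ) (A : Finset ℝ) : Set ℝ :=
  { r : ℝ | ∃ p : ℝ → ℝ, (∀ x, 0 ≤ p x) ∧ (∀ x, p x ≠ 0 → x ∈ A) ∧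
      (∑ x ∈ A, p x) = 1 ∧
      r = (∑ x ∈ A, ∑ y ∈ A, p x * p y * Real.exp (-(t * dist x y)))⁻¹ }

lemma Dfin_eq_sSup (t : ℝ) {A : Finset ℝ} (hA : A.Nonempty) : Dfin t A = sSup (DS t A) := by
  rw [Dfin, if_pos hA]; rfl

lemma pointmass_mem (t : ℝ) {A : Finset ℝ} {a : ℝ} (ha : a ∈ A) : (1:ℝ) ∈ DS t A := by
  refine ⟨fun z => if z = a then 1 else 0, ?_, ?_, ?_, ?_⟩
  · intro z; simp only []; split <;> norm_num
  · intro z hz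
    by_contra h
    apply hz
    simp only []
    rw [if_neg]
    intro he
    exact h (he ▸ ha)
  · rw [Finset.sum_ite_eq' A a (fun _ => (1:ℝ)), if_pos ha]
  · have h1 : ∀ z ∈ A, (∑ w ∈ A, (if z = a then (1:ℝ) else 0) * (if w = a then (1:ℝ) else 0)
        * Real.exp (-(t * dist z w)))
        = (if z = a then (1:ℝ) * Real.exp (-(t * dist z a)) else 0) := by
      intro z hz
      have : ∀ w ∈ A, (if z = a then (1:ℝ) else 0) * (if w = a then (1:ℝ) else 0)
          * Real.exp (-(t * dist z w))
          = (if w = a then (if z = a then (1:ℝ) else 0) * Real.exp (-(t * dist z w)) else 0) := by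
        intro w _
        by_cases h : w = a <;> simp [h]
      rw [Finset.sum_congr rfl this, Finset.sum_ite_eq' A a, if_pos ha]
      by_cases h : z = a <;> simp [h]
    rw [Finset.sum_congr rfl h1, Finset.sum_ite_eq' A a, if_pos ha, dist_self]
    norm_num

lemma DS_elt_le (t : ℝ) (ht : 0 ≤ t) {A : Finset ℝ} {C : ℝ} (hC0 : 0 ≤ C)
    (hC : ∀ a ∈ A, ∀ b ∈ A, dist a b ≤ C) : ∀ r ∈ DS t A, r ≤ Real.exp (t * C) := by
  rintro r ⟨p, hp0, hsupp, hsum, hr⟩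
  have hQ : Real.exp (-(t * C)) ≤ ∑ z ∈ A, ∑ w ∈ A, p z * p w * Real.exp (-(t * dist z w)) := by
    have e1 : Real.exp (-(t * C)) = ∑ z ∈ A, ∑ w ∈ A, p z * p w * Real.exp (-(t * C)) := by
      have : (∑ z ∈ A, ∑ w ∈ A, p z * p w * Real.exp (-(t * C)))
          = ((∑ z ∈ A, p z) * (∑ w ∈ A, p w)) * Real.exp (-(t * C)) := by
        rw [Finset.sum_mul_sum, Finset.sum_mul]
        apply Finset.sum_congr rfl
        intro z _
        rw [Finset.sum_mul]
      rw [this, hsum]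
      ring
    rw [e1]
    apply Finset.sum_le_sum
    intro z hz
    apply Finset.sum_le_sum
    intro w hw
    apply mul_le_mul_of_nonneg_left _ (mul_nonneg (hp0 z) (hp0 w))
    apply Real.exp_le_exp.mpr
    have := hC z hz w hw
    nlinarith
  have hQpos : (0:ℝ) < ∑ z ∈ A, ∑ w ∈ A, p z * p w * Real.exp (-(t * dist z w)) :=
    lt_of_lt_of_le (Real.exp_pos _) hQ
  rw [hr]
  calc (∑ z ∈ A, ∑ w ∈ A, p z * p w * Real.exp (-(t * dist z w)))⁻¹
      ≤ (Real.exp (-(t * C)))⁻¹ := inv_anti₀ (Real.exp_pos _) hQ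
    _ = Real.exp (t * C) := by rw [← Real.exp_neg, neg_neg]

lemma diam_bound (A : Finset ℝ) : ∃ C, 0 ≤ C ∧ ∀ a ∈ A, ∀ b ∈ A, dist a b ≤ C := by
  rcases A.eq_empty_or_nonempty with h | h
  · exact ⟨0, le_refl _, by simp [h]⟩
  · refine ⟨A.max' h - A.min' h, ?_, ?_⟩
    · linarith [Finset.min'_le A _ (Finset.max'_mem A h)]
    · intro a ha b hb
      rw [Real.dist_eq, abs_sub_le_iff]
      constructor <;>
        [linarith [Finset.le_max' A a ha, Finset.min'_le A b hb];
         linarith [Finset.le_max' A b hb, Finset.min'_le A a ha]]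

lemma DS_bddAbove (t : ℝ) (ht : 0 ≤ t) (A : Finset ℝ) : BddAbove (DS t A) := by
  obtain ⟨C, hC0, hC⟩ := diam_bound A
  exact ⟨Real.exp (t * C), fun r hr => DS_elt_le t ht hC0 hC r hr⟩

lemma Dfin_ge_one (t : ℝ) (ht : 0 ≤ t) {A : Finset ℝ} (hA : A.Nonempty) : 1 ≤ Dfin t A := by
  rw [Dfin_eq_sSup t hA]
  exact le_csSup (DS_bddAbove t ht A) (pointmass_mem t hA.choose_spec)

lemma Dfin_le_exp (t : ℝ) (ht : 0 ≤ t) {A : Finset ℝ} {C : ℝ} (hC0 : 0 ≤ C)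
    (hC : ∀ a ∈ A, ∀ b ∈ A, dist a b ≤ C) : Dfin t A ≤ Real.exp (t * C) := by
  rcases A.eq_empty_or_nonempty with h | h
  · rw [Dfin, if_neg (by simp [h])]
    rw [show (1:ℝ) = Real.exp 0 from (Real.exp_zero).symm]
    apply Real.exp_le_exp.mpr
    positivity
  · rw [Dfin_eq_sSup t h]
    apply Real.sSup_le (DS_elt_le t ht hC0 hC) (Real.exp_pos _).le

lemma Dfin_mono (t : ℝ) (ht : 0 ≤ t) {A B : Finset ℝ} (hAB : A ⊆ B) :
    Dfin t A ≤ Dfin t B := by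
  rcases A.eq_empty_or_nonempty with h | h
  · rw [Dfin, if_neg (by simp [h])]
    rcases B.eq_empty_or_nonempty with hB | hB
    · rw [Dfin, if_neg (by simp [hB])]
    · exact Dfin_ge_one t ht hB
  · have hB : B.Nonempty := h.mono hAB
    rw [Dfin_eq_sSup t h, Dfin_eq_sSup t hB]
    apply csSup_le_csSup (DS_bddAbove t ht B) ⟨1, pointmass_mem t h.choose_spec⟩
    rintro r ⟨p, hp0, hsupp, hsum, hr⟩
    have hz0 : ∀ z, z ∉ A → p z = 0 := by
      intro z hz
      by_contra hne
      exact hz (hsupp z hne)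
    refine ⟨p, hp0, fun z hz => hAB (hsupp z hz), ?_, ?_⟩
    · rw [← hsum]
      exact (Finset.sum_subset hAB (fun z _ hzA => hz0 z hzA)).symm
    · rw [hr]
      congr 1
      have hinner : ∀ z, (∑ w ∈ A, p z * p w * Real.exp (-(t * dist z w)))
          = ∑ w ∈ B, p z * p w * Real.exp (-(t * dist z w)) :=
        fun z => Finset.sum_subset hAB (fun w _ hw => by rw [hz0 w hw]; ring)
      rw [Finset.sum_congr rfl (fun z _ => hinner z)]
      apply Finset.sum_subset hAB
      intro z _ hzA
      apply Finset.sum_eq_zero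
      intro w _
      rw [hz0 z hzA]
      ring

lemma exists_enum (G : Finset ℝ) (hG : G.Nonempty) :
    ∃ x : ℕ → ℝ, (∀ i, i + 1 < G.card → x i < x (i+1)) ∧ (Finset.range G.card).image x = G := by
  set n := G.card with hn
  set e := G.orderIsoOfFin (rfl : G.card = n) with he
  refine ⟨fun i => if h : i < n then (e ⟨i, h⟩ : ℝ) else 0, ?_, ?_⟩
  · intro i hi
    have h1 : i < n := by omega
    dsimp only
    rw [dif_pos h1, dif_pos hi]
    have := e.strictMono (show (⟨i, h1⟩ : Fin n) < ⟨i+1, hi⟩ from by simp [Fin.lt_def])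
    exact_mod_cast this
  · ext z
    simp only [Finset.mem_image, Finset.mem_range]
    constructor
    · rintro ⟨i, hi, rfl⟩
      rw [dif_pos hi]
      exact (e ⟨i, hi⟩).2
    · intro hz
      obtain ⟨k, hk⟩ := e.surjective ⟨z, hz⟩
      refine ⟨k, k.2, ?_⟩
      rw [dif_pos k.2]
      simp only [Fin.eta]
      rw [hk]

lemma Dfin_smul_combo (t : ℝ) (ht : 0 < t) (G : Finset ℝ) (hG : G.Nonempty)
    {l1 l2 p q : ℝ} (h1 : 0 ≤ l1) (h2 : 0 ≤ l2) (hp : 0 ≤ p) (hq : 0 ≤ q) (hpq : p + q = 1) :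
    p * Dfin t (l1 • G) + q * Dfin t (l2 • G) ≤ Dfin t ((p * l1 + q * l2) • G) := by
  obtain ⟨x, hx, himg⟩ := exists_enum G hG
  set n := G.card with hn
  have hn0 : 0 < n := Finset.card_pos.mpr hG
  have hval : ∀ l : ℝ, 0 ≤ l → Dfin t (l • G)
      = 1 + ∑ j ∈ Finset.range (n-1), Real.tanh ((t * (x (j+1) - x j) / 2) * l) := by
    intro l hl
    rcases eq_or_lt_of_le hl with h | h
    · rw [← h]
      have hzero : (0:ℝ) • G = ({(0:ℝ)} : Finset ℝ) := by
        rw [Finset.smul_finset_def]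
        rw [Finset.image_congr (g := fun _ => (0:ℝ)) (fun z _ => by simp)]
        exact Finset.image_const hG 0
      have hone : Dfin t ({(0:ℝ)} : Finset ℝ) = 1 := by
        have hf := Dfin_eq_formula t ht 1 one_pos (fun _ => (0:ℝ)) (by omega)
        simpa using hf
      rw [hzero, hone]
      have : ∀ j ∈ Finset.range (n-1), Real.tanh ((t * (x (j+1) - x j) / 2) * 0) = 0 := by
        intro j _
        rw [mul_zero, Real.tanh_zero]
      rw [Finset.sum_congr rfl this]
      simp
    · have hsmul : l • G = (Finset.range n).image (fun i => l * x i) := by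
        rw [Finset.smul_finset_def, ← himg, Finset.image_image]
        rfl
      rw [hsmul, Dfin_eq_formula t ht n hn0 _ (fun i hi => by
        have := hx i hi
        have : x (i+1) - x i > 0 := by linarith
        nlinarith)]
      congr 1
      apply Finset.sum_congr rfl
      intro j _
      rw [gtau]
      congr 1
      ring
  have hl3 : 0 ≤ p * l1 + q * l2 := by positivity
  rw [hval l1 h1, hval l2 h2, hval _ hl3]
  set S1 := ∑ j ∈ Finset.range (n-1), Real.tanh ((t * (x (j+1) - x j) / 2) * l1) with hS1
  set S2 := ∑ j ∈ Finset.range (n-1), Real.tanh ((t * (x (j+1) - x j) / 2) * l2) with hS2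
  have hcomb : p * (1 + S1) + q * (1 + S2) = 1 + (p * S1 + q * S2) := by
    have : p * (1 + S1) + q * (1 + S2) = (p + q) + (p * S1 + q * S2) := by ring
    rw [this, hpq]
  rw [hcomb]
  apply add_le_add (le_refl _)
  rw [hS1, hS2, Finset.mul_sum, Finset.mul_sum, ← Finset.sum_add_distrib]
  apply Finset.sum_le_sum
  intro j hj
  have hj1 : j + 1 < n := by
    simp only [Finset.mem_range] at hj
    omega
  have hgap : 0 < x (j+1) - x j := by linarith [hx j hj1]
  have ha : 0 ≤ t * (x (j+1) - x j) / 2 := by positivity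
  exact tanh_combo ha h1 h2 hp hq hpq

def CS (t : ℝ) (K : Set ℝ) : Set ℝ := { r : ℝ | ∃ F : Finset ℝ, ↑F ⊆ K ∧ r = Dfin t F }

lemma Dcpt_eq_sSup (t : ℝ) (K : Set ℝ) : Dcpt t K = sSup (CS t K) := rfl

lemma CS_nonempty (t : ℝ) (K : Set ℝ) : (CS t K).Nonempty :=
  ⟨Dfin t ∅, ∅, by simp, rfl⟩

lemma CS_bdd (t : ℝ) (ht : 0 ≤ t) {E : Set ℝ} {C : ℝ} (hC0 : 0 ≤ C)
    (hC : ∀ a ∈ E, ∀ b ∈ E, dist a b ≤ C) {l : ℝ} (hl : 0 ≤ l) :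
    BddAbove (CS t (l • E)) := by
  refine ⟨Real.exp (t * (l * C)), ?_⟩
  rintro r ⟨F, hF, rfl⟩
  apply Dfin_le_exp t ht (by positivity)
  intro a ha b hb
  obtain ⟨a', ha', rfl⟩ := Set.mem_smul_set.mp (hF ha)
  obtain ⟨b', hb', rfl⟩ := Set.mem_smul_set.mp (hF hb)
  have hd := hC a' ha' b' hb'
  rw [Real.dist_eq] at hd ⊢
  rw [smul_eq_mul, smul_eq_mul, show l * a' - l * b' = l * (a' - b') from by ring, abs_mul,
    abs_of_nonneg hl]
  exact mul_le_mul_of_nonneg_left hd hl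

lemma Dcpt_concave_combo (t : ℝ) (ht : 0 < t) {E : Set ℝ} (hE : E.Nonempty)
    {C : ℝ} (hC0 : 0 ≤ C) (hC : ∀ a ∈ E, ∀ b ∈ E, dist a b ≤ C)
    {x y a b : ℝ} (hx : 0 ≤ x) (hy : 0 ≤ y) (ha : 0 ≤ a) (hb : 0 ≤ b) (hab : a + b = 1) :
    a * Dcpt t (x • E) + b * Dcpt t (y • E) ≤ Dcpt t ((a * x + b * y) • E) := by
  obtain ⟨e0, he0⟩ := hE
  have hc : 0 ≤ a * x + b * y := by positivity
  set R := Dcpt t ((a * x + b * y) • E) with hR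
  -- every admissible value can be dominated via a finite subset of E
  have hget : ∀ (l : ℝ), 0 ≤ l → ∀ F : Finset ℝ, ↑F ⊆ l • E →
      ∃ G : Finset ℝ, ↑G ⊆ E ∧ G.Nonempty ∧ Dfin t F ≤ Dfin t (l • G) := by
    intro l hl F hF
    rcases eq_or_lt_of_le hl with h | h
    · refine ⟨{e0}, by simpa using he0, Finset.singleton_nonempty _, ?_⟩
      rw [← h]
      have h0G : (0:ℝ) • ({e0} : Finset ℝ) = ({(0:ℝ)} : Finset ℝ) := by
        rw [Finset.smul_finset_singleton, smul_eq_mul, zero_mul]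
      rw [h0G]
      apply Dfin_mono t ht.le
      intro z hz
      have hz2 : (z:ℝ) ∈ (0:ℝ) • E := by
        rw [h]
        exact hF hz
      rw [Set.zero_smul_set ⟨e0, he0⟩] at hz2
      simpa using hz2
    · refine ⟨l⁻¹ • F ∪ {e0}, ?_, ?_, ?_⟩
      · intro z hz
        rw [Finset.coe_union, Set.mem_union] at hz
        rcases hz with hz | hz
        · rw [Finset.coe_smul_finset, Set.mem_smul_set] at hz
          obtain ⟨w, hw, rfl⟩ := hz
          obtain ⟨w', hw', rfl⟩ := Set.mem_smul_set.mp (hF hw)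
          rw [smul_eq_mul, smul_eq_mul, show l⁻¹ * (l * w') = (l⁻¹ * l) * w' from by ring,
            inv_mul_cancel₀ h.ne', one_mul]
          exact hw'
        · simp only [Finset.coe_singleton, Set.mem_singleton_iff] at hz
          rw [hz]
          exact he0
      · apply Finset.Nonempty.inr (Finset.singleton_nonempty _)
      · apply Dfin_mono t ht.le
        intro z hz
        rw [Finset.smul_finset_union]
        apply Finset.mem_union_left
        have : z ∈ l • l⁻¹ • F := by
          rw [smul_smul, mul_inv_cancel₀ h.ne', one_smul]
          exact hz
        exact this
  -- core inequality for elements of the two suprema sets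
  have core : ∀ r1 ∈ CS t (x • E), ∀ r2 ∈ CS t (y • E), a * r1 + b * r2 ≤ R := by
    rintro r1 ⟨F1, hF1, rfl⟩ r2 ⟨F2, hF2, rfl⟩
    obtain ⟨G1, hG1E, hG1ne, hr1⟩ := hget x hx F1 hF1
    obtain ⟨G2, hG2E, hG2ne, hr2⟩ := hget y hy F2 hF2
    set G := G1 ∪ G2 with hG
    have hGne : G.Nonempty := Finset.Nonempty.inl hG1ne
    have hGE : ↑G ⊆ E := by
      rw [hG, Finset.coe_union]
      exact Set.union_subset hG1E hG2E
    have h1 : Dfin t (x • G1) ≤ Dfin t (x • G) :=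
      Dfin_mono t ht.le (Finset.smul_finset_subset_smul_finset Finset.subset_union_left)
    have h2 : Dfin t (y • G2) ≤ Dfin t (y • G) :=
      Dfin_mono t ht.le (Finset.smul_finset_subset_smul_finset Finset.subset_union_right)
    have hcombo := Dfin_smul_combo t ht G hGne hx hy ha hb hab
    have hmem : Dfin t ((a * x + b * y) • G) ∈ CS t ((a * x + b * y) • E) := by
      refine ⟨(a * x + b * y) • G, ?_, rfl⟩
      rw [Finset.coe_smul_finset]
      exact Set.smul_set_mono hGE
    have hle : Dfin t ((a * x + b * y) • G) ≤ R :=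
      le_csSup (CS_bdd t ht.le hC0 hC hc) hmem
    calc a * Dfin t F1 + b * Dfin t F2
        ≤ a * Dfin t (x • G) + b * Dfin t (y • G) := by
          apply add_le_add
          · exact mul_le_mul_of_nonneg_left (le_trans hr1 h1) ha
          · exact mul_le_mul_of_nonneg_left (le_trans hr2 h2) hb
      _ ≤ Dfin t ((a * x + b * y) • G) := hcombo
      _ ≤ R := hle
  -- conclude for the suprema
  rcases eq_or_lt_of_le ha with ha0 | ha'
  · have hb1 : b = 1 := by linarith
    have hxy : a * x + b * y = y := by rw [← ha0, hb1]; ring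
    rw [hR, hxy, ← ha0, hb1]
    norm_num
  rcases eq_or_lt_of_le hb with hb0 | hb'
  · have ha1 : a = 1 := by linarith
    have hxy : a * x + b * y = x := by rw [← hb0, ha1]; ring
    rw [hR, hxy, ← hb0, ha1]
    norm_num
  have step1 : Dcpt t (x • E) ≤ (R - b * Dcpt t (y • E)) / a := by
    rw [Dcpt_eq_sSup]
    apply csSup_le (CS_nonempty t _)
    intro r1 hr1
    rw [le_div_iff₀ ha']
    have step2 : Dcpt t (y • E) ≤ (R - a * r1) / b := by
      rw [Dcpt_eq_sSup]
      apply csSup_le (CS_nonempty t _)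
      intro r2 hr2
      rw [le_div_iff₀ hb']
      have := core r1 hr1 r2 hr2
      linarith
    have := (le_div_iff₀ hb').mp step2
    linarith
  have := (le_div_iff₀ ha').mp step1
  linarith

end DcptAux

/-- For a nonempty compact E ⊆ ℝ, the function
λ ↦ D^t(λ·E) − (λ·D^t(E) + (1 − λ)) is concave on [0, ∞). -/
theorem Dcpt_smul_concave (t : ℝ) (ht : 0 < t)
    (E : Set ℝ) (hE : E.Nonempty) (hEc : IsCompact E) :
    ConcaveOn ℝ (Set.Ici (0 : ℝ))
      (fun l : ℝ => Dcpt t (l • E) - (l * Dcpt t E + (1 - l))) := by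
  obtain ⟨C, hC⟩ := Metric.isBounded_iff.mp hEc.isBounded
  have hC' : ∀ a ∈ E, ∀ b ∈ E, dist a b ≤ max C 0 := fun a ha b hb =>
    le_trans (hC ha hb) (le_max_left _ _)
  have hC0 : 0 ≤ max C 0 := le_max_right _ _
  constructor
  · exact convex_Ici 0
  · intro x hx y hy a b ha hb hab
    simp only [smul_eq_mul]
    have key := Dcpt_concave_combo t ht hE hC0 hC' (Set.mem_Ici.mp hx) (Set.mem_Ici.mp hy)
      ha hb hab
    have iden : a * (x * Dcpt t E + (1 - x)) + b * (y * Dcpt t E + (1 - y))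
        = (a * x + b * y) * Dcpt t E + (1 - (a * x + b * y)) := by
      have h2 : a * (x * Dcpt t E + (1 - x)) + b * (y * Dcpt t E + (1 - y))
          = (a * x + b * y) * Dcpt t E + ((a + b) - (a * x + b * y)) := by ring
      rw [h2, hab]
    nlinarith [key, iden]
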